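/- arXiv:1511.05398 — 5 statements merged into one kernel-verified Lean document; each statement's English description precedes it below -/
import Mathlib

section
/- For every finite connected simple graph G, every positive integer q, and every integer k ≥ max{χ(G), ⌈χ(G)/2⌉ + q}, there exists a proper k-coloring c of G such that the q-subgraph G_{c,q} is connected (as a spanning subgraph of G). -/
/-- A proper `k`-coloring of `G`: colors are taken in `{1, …, k}` and adjacent
vertices receive different colors. -/
def IsProperColoring {V : Type*} (G : SimpleGraph V) (k : ℕ) (c : V → ℕ) : Prop :=
  (∀ v : V, 1 ≤ c v ∧ c v ≤ k) ∧ ∀ ⦃u v : V⦄, G.Adj u v → c u ≠ c v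

/-- The chromatic number of `G`: the least `k` such that `G` has a proper
`k`-coloring. -/
noncomputable def chromNum {V : Type*} (G : SimpleGraph V) : ℕ :=
  sInf {k : ℕ | ∃ c : V → ℕ, IsProperColoring G k c}

/-- A `q`-backbone `k`-coloring of `(G, H)`: a proper `k`-coloring of `G` such
that the colors of the endpoints of every edge of `H` differ by at least `q`. -/
def IsBackboneColoring {V : Type*} (G H : SimpleGraph V) (q k : ℕ) (c : V → ℕ) : Prop :=
  IsProperColoring G k c ∧ ∀ ⦃u v : V⦄, H.Adj u v → (q : ℤ) ≤ |(c u : ℤ) - (c v : ℤ)|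

/-- The `q`-backbone chromatic number `BBC_q(G, H)`: the least `k` for which a
`q`-backbone `k`-coloring of `(G, H)` exists. -/
noncomputable def BBC {V : Type*} (G H : SimpleGraph V) (q : ℕ) : ℕ :=
  sInf {k : ℕ | ∃ c : V → ℕ, IsBackboneColoring G H q k c}

/-- The `q`-subgraph `G_{c,q}` of a coloring `c`: the spanning subgraph of `G`
whose edges are those edges of `G` whose endpoint colors differ by at least `q`. -/
def qSubgraph {V : Type*} (G : SimpleGraph V) (q : ℕ) (c : V → ℕ) : SimpleGraph V where
  Adj u v := G.Adj u v ∧ (q : ℤ) ≤ |(c u : ℤ) - (c v : ℤ)|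
  symm := by
    constructor
    intro u v h
    exact ⟨h.1.symm, by rw [abs_sub_comm]; exact h.2⟩
  loopless := by
    constructor
    intro v h
    exact (G.ne_of_adj h.1) rfl

/-!
Color only with a palette in which every color is at distance at least `q` from one of two
anchor colors `1` and `k`, themselves `q` apart; the coloring obtained from a `χ(G)`-coloring
by shifting its upper half to the top of `{1, …, k}` is such a coloring. Among these colorings
take one whose `q`-component of a fixed root `r` is maximal. If some edge `xw` leaves it, a
Kempe swap recolors `w` with an anchor `e` far from `c x`. When `c w` is also far from `e`, the
Kempe chain of `w` lies in the `q`-component of `w` and the swap leaves the component of `r`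
untouched. Otherwise `c w` and `e` are both far from the other anchor `e'`; then either the chain
avoids the component of `r`, or it enters it along an edge whose two colors are far from `e'`,
and the first case applies to that edge with anchor `e'`. Either way the component grows.
-/

namespace QSubgraph

variable {V : Type*}

def FarApart (q a b : ℕ) : Prop := (q : ℤ) ≤ |(a : ℤ) - (b : ℤ)|

lemma FarApart.symm {q a b : ℕ} (h : FarApart q a b) : FarApart q b a := by
  rwa [FarApart, abs_sub_comm]

lemma farApart_of_add_le {q a b : ℕ} (h : a + q ≤ b) : FarApart q a b := by
  rw [FarApart, abs_sub_comm]
  exact le_abs.mpr (Or.inl (by omega))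

lemma qSubgraph_adj {G : SimpleGraph V} {q : ℕ} {c : V → ℕ} {u v : V} :
    (qSubgraph G q c).Adj u v ↔ G.Adj u v ∧ FarApart q (c u) (c v) := Iff.rfl

def IsProperColoringIn (G : SimpleGraph V) (P : Set ℕ) (c : V → ℕ) : Prop :=
  (∀ v, c v ∈ P) ∧ ∀ ⦃u v : V⦄, G.Adj u v → c u ≠ c v

def qComponent (G : SimpleGraph V) (q : ℕ) (c : V → ℕ) (r : V) : Set V :=
  {v | (qSubgraph G q c).Reachable r v}

lemma reachable_of_walk_of_adj_imp {H H' : SimpleGraph V} {r : V}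
    (h : ∀ ⦃u v⦄, H.Reachable u r → H.Adj u v → H'.Adj u v) {x y : V} (p : H.Walk x y)
    (hy : H.Reachable y r) : H'.Reachable x y := by
  induction p with
  | nil => rfl
  | cons hadj p ih =>
    have hu : H.Reachable _ r := hadj.reachable.trans (p.reachable.trans hy)
    exact (h hu hadj).reachable.trans (ih hy)

lemma qComponent_subset_of_eqOn {G : SimpleGraph V} {q : ℕ} {c c' : V → ℕ} {r : V}
    (h : Set.EqOn c' c (qComponent G q c r)) : qComponent G q c r ⊆ qComponent G q c' r := by
  have hstep : ∀ ⦃u u'⦄, (qSubgraph G q c).Reachable u r → (qSubgraph G q c).Adj u u' →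
      (qSubgraph G q c').Adj u u' := by
    intro u u' hu hadj
    have hu' : u' ∈ qComponent G q c r := hu.symm.trans hadj.reachable
    rw [qSubgraph_adj, h hu.symm, h hu']
    exact hadj
  rintro v ⟨p⟩
  exact (reachable_of_walk_of_adj_imp hstep p.reverse .rfl).symm

section Kempe

variable (G : SimpleGraph V) (c : V → ℕ) (a b : ℕ)

def kempeGraph : SimpleGraph V where
  Adj u v := G.Adj u v ∧ c u ∈ ({a, b} : Set ℕ) ∧ c v ∈ ({a, b} : Set ℕ)
  symm := ⟨fun _ _ h => ⟨h.1.symm, h.2.2, h.2.1⟩⟩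
  loopless := ⟨fun _ h => G.ne_of_adj h.1 rfl⟩

def kempeChain (w : V) : Set V := {v | (kempeGraph G c a b).Reachable w v}

open Classical in
noncomputable def kempeSwap (w : V) (v : V) : ℕ :=
  if v ∈ kempeChain G c a b w then Equiv.swap a b (c v) else c v

variable {G c a b} {w : V}

lemma kempeSwap_of_mem {v : V} (hv : v ∈ kempeChain G c a b w) :
    kempeSwap G c a b w v = Equiv.swap a b (c v) := if_pos hv

lemma kempeSwap_of_notMem {v : V} (hv : v ∉ kempeChain G c a b w) :
    kempeSwap G c a b w v = c v := if_neg hv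

lemma kempeSwap_self : kempeSwap G c (c w) b w w = b := by
  rw [kempeSwap_of_mem SimpleGraph.Reachable.rfl, Equiv.swap_apply_left]

lemma mem_kempeChain_of_adj {u v : V} (hu : u ∈ kempeChain G c a b w) (huv : G.Adj u v)
    (hcu : c u ∈ ({a, b} : Set ℕ)) (hcv : c v ∈ ({a, b} : Set ℕ)) :
    v ∈ kempeChain G c a b w :=
  SimpleGraph.Reachable.trans hu (SimpleGraph.Adj.reachable ⟨huv, hcu, hcv⟩)

lemma kempeSwap_ne_of_mem_of_notMem (hc : ∀ ⦃u v⦄, G.Adj u v → c u ≠ c v) {u v : V}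
    (hu : u ∈ kempeChain G c a b w) (hv : v ∉ kempeChain G c a b w) (huv : G.Adj u v) :
    kempeSwap G c a b w u ≠ kempeSwap G c a b w v := by
  rw [kempeSwap_of_mem hu, kempeSwap_of_notMem hv]
  by_cases hcu : c u ∈ ({a, b} : Set ℕ)
  · have hcv : c v ∉ ({a, b} : Set ℕ) := fun hcv => hv (mem_kempeChain_of_adj hu huv hcu hcv)
    rintro h
    apply hcv
    simp only [Set.mem_insert_iff, Set.mem_singleton_iff] at hcu
    rcases hcu with hcu | hcu <;> simp [← h, hcu]
  · simp only [Set.mem_insert_iff, Set.mem_singleton_iff, not_or] at hcu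
    rw [Equiv.swap_apply_of_ne_of_ne hcu.1 hcu.2]
    exact hc huv

lemma kempeSwap_adj_ne (hc : ∀ ⦃u v⦄, G.Adj u v → c u ≠ c v) {u v : V} (huv : G.Adj u v) :
    kempeSwap G c a b w u ≠ kempeSwap G c a b w v := by
  by_cases hu : u ∈ kempeChain G c a b w <;> by_cases hv : v ∈ kempeChain G c a b w
  · rw [kempeSwap_of_mem hu, kempeSwap_of_mem hv]
    exact (Equiv.swap a b).injective.ne (hc huv)
  · exact kempeSwap_ne_of_mem_of_notMem hc hu hv huv
  · exact (kempeSwap_ne_of_mem_of_notMem hc hv hu huv.symm).symm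
  · rw [kempeSwap_of_notMem hu, kempeSwap_of_notMem hv]
    exact hc huv

lemma IsProperColoringIn.kempeSwap {P : Set ℕ} (hc : IsProperColoringIn G P c) (ha : a ∈ P)
    (hb : b ∈ P) : IsProperColoringIn G P (kempeSwap G c a b w) := by
  refine ⟨fun v => ?_, fun u v huv => kempeSwap_adj_ne hc.2 huv⟩
  by_cases hv : v ∈ kempeChain G c a b w
  · rw [kempeSwap_of_mem hv, Equiv.swap_apply_def]
    split_ifs
    exacts [hb, ha, hc.1 v]
  · rw [kempeSwap_of_notMem hv]
    exact hc.1 v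

lemma kempeGraph_le_qSubgraph {q : ℕ} (hc : ∀ ⦃u v⦄, G.Adj u v → c u ≠ c v)
    (hab : FarApart q a b) : kempeGraph G c a b ≤ qSubgraph G q c := by
  rintro u v ⟨huv, hu, hv⟩
  refine ⟨huv, ?_⟩
  rcases hu with hu | hu <;> rcases hv with hv | hv
  · exact absurd (hu.trans hv.symm) (hc huv)
  · rw [hu, hv]; exact hab
  · rw [hu, hv]; exact hab.symm
  · exact absurd (hu.trans hv.symm) (hc huv)

end Kempe

section Extension

variable {G : SimpleGraph V} {q : ℕ} {P : Set ℕ} {c : V → ℕ} {r x w : V} {b e e' : ℕ}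

lemma exists_ssubset_of_disjoint_kempeChain (hc : IsProperColoringIn G P c) (hb : b ∈ P)
    (hx : x ∈ qComponent G q c r) (hw : w ∉ qComponent G q c r) (hxw : G.Adj x w)
    (hbx : FarApart q b (c x))
    (hdisj : Disjoint (kempeChain G c (c w) b w) (qComponent G q c r)) :
    ∃ c', IsProperColoringIn G P c' ∧ qComponent G q c r ⊂ qComponent G q c' r := by
  set c' := kempeSwap G c (c w) b w
  have heq : Set.EqOn c' c (qComponent G q c r) := fun v hv =>
    kempeSwap_of_notMem (hdisj.notMem_of_mem_right hv)
  have hsub := qComponent_subset_of_eqOn heq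
  have hxw' : (qSubgraph G q c').Adj x w := by
    rw [qSubgraph_adj, show c' w = b from kempeSwap_self, heq hx]
    exact ⟨hxw, hbx.symm⟩
  have hw' : w ∈ qComponent G q c' r := SimpleGraph.Reachable.trans (hsub hx) hxw'.reachable
  exact ⟨c', hc.kempeSwap (hc.1 w) hb, (Set.ssubset_iff_of_subset hsub).mpr ⟨w, hw', hw⟩⟩

lemma kempeChain_disjoint_qComponent (hc : IsProperColoringIn G P c)
    (hw : w ∉ qComponent G q c r) (hbw : FarApart q (c w) b) :
    Disjoint (kempeChain G c (c w) b w) (qComponent G q c r) := by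
  refine Set.disjoint_left.mpr fun v hv hvr => hw ?_
  exact SimpleGraph.Reachable.trans hvr (hv.mono (kempeGraph_le_qSubgraph hc.2 hbw)).symm

lemma exists_ssubset_of_farApart (hc : IsProperColoringIn G P c) (hb : b ∈ P)
    (hx : x ∈ qComponent G q c r) (hw : w ∉ qComponent G q c r) (hxw : G.Adj x w)
    (hbx : FarApart q b (c x)) (hbw : FarApart q b (c w)) :
    ∃ c', IsProperColoringIn G P c' ∧ qComponent G q c r ⊂ qComponent G q c' r :=
  exists_ssubset_of_disjoint_kempeChain hc hb hx hw hxw hbx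
    (kempeChain_disjoint_qComponent hc hw hbw.symm)

lemma exists_ssubset_of_anchors (hc : IsProperColoringIn G P c) (he : e ∈ P) (he' : e' ∈ P)
    (hee' : FarApart q e e') (hx : x ∈ qComponent G q c r) (hw : w ∉ qComponent G q c r)
    (hxw : G.Adj x w) (hex : FarApart q e (c x))
    (hew : FarApart q e (c w) ∨ FarApart q e' (c w)) :
    ∃ c', IsProperColoringIn G P c' ∧ qComponent G q c r ⊂ qComponent G q c' r := by
  rcases hew with hew | he'w
  · exact exists_ssubset_of_farApart hc he hx hw hxw hex hew
  by_cases hdisj : Disjoint (kempeChain G c (c w) e w) (qComponent G q c r)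
  · exact exists_ssubset_of_disjoint_kempeChain hc he hx hw hxw hex hdisj
  obtain ⟨v, ⟨p⟩, hv⟩ := Set.not_disjoint_iff.mp hdisj
  obtain ⟨d, -, hout, hin⟩ :=
    p.exists_boundary_dart (qComponent G q c r)ᶜ hw (Set.notMem_compl_iff.mpr hv)
  obtain ⟨hadj, hout_col, hin_col⟩ := d.adj
  have hfar : ∀ a ∈ ({c w, e} : Set ℕ), FarApart q e' a := by
    rintro a (rfl | rfl)
    exacts [he'w, hee'.symm]
  exact exists_ssubset_of_farApart hc he' (Set.notMem_compl_iff.mp hin) hout hadj.symm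
    (hfar _ hin_col) (hfar _ hout_col)

lemma exists_ssubset_qComponent (hG : G.Connected) (he : e ∈ P) (he' : e' ∈ P)
    (hee' : FarApart q e e') (hP : ∀ a ∈ P, FarApart q e a ∨ FarApart q e' a)
    (hc : IsProperColoringIn G P c) (hC : qComponent G q c r ≠ Set.univ) :
    ∃ c', IsProperColoringIn G P c' ∧ qComponent G q c r ⊂ qComponent G q c' r := by
  obtain ⟨v, hv⟩ := (Set.ne_univ_iff_exists_notMem _).mp hC
  obtain ⟨p⟩ := hG.preconnected r v
  obtain ⟨d, -, hx, hw⟩ := p.exists_boundary_dart _ (SimpleGraph.Reachable.rfl) hv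
  rcases hP _ (hc.1 d.fst) with h | h
  · exact exists_ssubset_of_anchors hc he he' hee' hx hw d.adj h (hP _ (hc.1 d.snd))
  · exact exists_ssubset_of_anchors hc he' he hee'.symm hx hw d.adj h (hP _ (hc.1 d.snd)).symm

theorem exists_isProperColoringIn_connected_qSubgraph [Finite V] (hG : G.Connected)
    (he : e ∈ P) (he' : e' ∈ P) (hee' : FarApart q e e')
    (hP : ∀ a ∈ P, FarApart q e a ∨ FarApart q e' a) (hc : IsProperColoringIn G P c) :
    ∃ c', IsProperColoringIn G P c' ∧ (qSubgraph G q c').Connected := by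
  obtain ⟨r⟩ := hG.nonempty
  obtain ⟨_, ⟨c', hc', rfl⟩, hmax⟩ := wellFounded_gt.has_min
    {C | ∃ c', IsProperColoringIn G P c' ∧ qComponent G q c' r = C} ⟨_, c, hc, rfl⟩
  have hC : qComponent G q c' r = Set.univ := by
    by_contra hC
    obtain ⟨c'', hc'', hlt⟩ := exists_ssubset_qComponent hG he he' hee' hP hc' hC
    exact hmax _ ⟨c'', hc'', rfl⟩ hlt
  exact ⟨c', hc', (SimpleGraph.connected_iff_exists_forall_reachable _).mpr
    ⟨r, Set.eq_univ_iff_forall.mp hC⟩⟩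

end Extension

lemma exists_isProperColoring_chromNum [Finite V] (G : SimpleGraph V) :
    ∃ c, IsProperColoring G (chromNum G) c := by
  refine Nat.sInf_mem (s := {k | ∃ c, IsProperColoring G k c}) ?_
  refine ⟨Nat.card V, fun v => Finite.equivFin V v + 1, fun v => ?_, ?_⟩
  · exact ⟨Nat.le_add_left 1 _, (Finite.equivFin V v).isLt⟩
  · intro u v huv h
    simp only [add_left_inj] at h
    exact huv.ne ((Finite.equivFin V).injective (Fin.ext h))

def farPalette (k q : ℕ) : Set ℕ := {a | 1 ≤ a ∧ a ≤ k ∧ (a + q ≤ k ∨ q + 1 ≤ a)}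

lemma farApart_or_of_mem_farPalette {k q a : ℕ} (ha : a ∈ farPalette k q) :
    FarApart q 1 a ∨ FarApart q k a := by
  rcases ha.2.2 with h | h
  · exact Or.inr (farApart_of_add_le h).symm
  · exact Or.inl (farApart_of_add_le (by omega))

lemma isProperColoringIn_farPalette {G : SimpleGraph V} {χ k q : ℕ} {φ : V → ℕ}
    (hφ : IsProperColoring G χ φ) (hχk : χ ≤ k) (hk : (χ + 1) / 2 + q ≤ k) :
    IsProperColoringIn G (farPalette k q)
      (fun v => if φ v ≤ (χ + 1) / 2 then φ v else φ v + (k - χ)) := by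
  refine ⟨fun v => ?_, fun u v huv => ?_⟩
  · have := hφ.1 v
    show _ ∧ _ ∧ _
    dsimp only
    split_ifs <;> omega
  · have := hφ.1 u
    have := hφ.1 v
    have := hφ.2 huv
    dsimp only
    split_ifs <;> omega

end QSubgraph

open QSubgraph

theorem stmt_1_general {V : Type*} [Fintype V] (G : SimpleGraph V) (hG : G.Connected)
    (q : ℕ) (k : ℕ)
    (hk : max (chromNum G) ((chromNum G + 1) / 2 + q) ≤ k) :
    ∃ c : V → ℕ, IsProperColoring G k c ∧ (qSubgraph G q c).Connected := by
  obtain ⟨r⟩ := hG.nonempty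
  obtain ⟨φ, hφ⟩ := exists_isProperColoring_chromNum G
  have hχ : 1 ≤ chromNum G := (hφ.1 r).1.trans (hφ.1 r).2
  rw [max_le_iff] at hk
  have h₁ : 1 ∈ farPalette k q := ⟨le_rfl, by omega, by omega⟩
  have hk' : k ∈ farPalette k q := ⟨by omega, le_rfl, by omega⟩
  obtain ⟨c, hc, hconn⟩ := exists_isProperColoringIn_connected_qSubgraph hG h₁ hk'
    (farApart_of_add_le (by omega)) (fun _ => farApart_or_of_mem_farPalette)
    (isProperColoringIn_farPalette hφ hk.1 hk.2)
  exact ⟨c, ⟨fun v => ⟨(hc.1 v).1, (hc.1 v).2.1⟩, hc.2⟩, hconn⟩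

/-- If `G` is connected and `k ≥ max {χ(G), ⌈χ(G)/2⌉ + q}`, then `G` has a
proper `k`-coloring `c` whose `q`-subgraph `G_{c,q}` is connected. -/
theorem stmt_1 {V : Type*} [Fintype V] (G : SimpleGraph V) (hG : G.Connected)
    (q : ℕ) (hq : 1 ≤ q) (k : ℕ)
    (hk : max (chromNum G) ((chromNum G + 1) / 2 + q) ≤ k) :
    ∃ c : V → ℕ, IsProperColoring G k c ∧ (qSubgraph G q c).Connected :=
  stmt_1_general G hG q k hk
end

section
/- Let G be a finite simple graph, let q be a positive integer, let H be a spanning subgraph of G with minimum degree δ(H) ≥ 1, and let c be a q-backbone k-coloring of (G,H) with k < 2q. Then no vertex u of G satisfies k − q < c(u) ≤ q; that is, none of the 2q − k colors in {k − q + 1, …, q} is used by c. Consequently k − (2q − k) ≥ χ(G). -/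
/-!
A vertex `u` with an `H`-neighbour `w` satisfies `|c u - c w| ≥ q` with `1 ≤ c w ≤ k`, so either
`c u ≤ k - q` (when `c w` lies above `c u`) or `c u > q` (when it lies below). Hence the colours
`k - q + 1, …, q` are unused, and shifting every colour above `q` down by `2q - k` closes the gap
and leaves a proper colouring with `k - (2q - k)` colours.
-/

theorem isProperColoring_of_isEmpty {V : Type*} [IsEmpty V] (G : SimpleGraph V) (k : ℕ)
    (c : V → ℕ) : IsProperColoring G k c :=
  ⟨isEmptyElim, fun u ↦ isEmptyElim u⟩

theorem chromNum_le_of_isProperColoring {V : Type*} {G : SimpleGraph V} {k : ℕ} {c : V → ℕ}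
    (hc : IsProperColoring G k c) : chromNum G ≤ k :=
  Nat.sInf_le ⟨c, hc⟩

theorem IsProperColoring.compress_gap {V : Type*} {G : SimpleGraph V} {k a d : ℕ} {c : V → ℕ}
    (hc : IsProperColoring G k c) (had : a + d ≤ k) (hgap : ∀ v, c v ≤ a ∨ a + d < c v) :
    IsProperColoring G (k - d) (fun v ↦ if c v ≤ a then c v else c v - d) := by
  refine ⟨fun v ↦ ?_, fun u v huv ↦ ?_⟩ <;> beta_reduce
  · have := hc.1 v
    have := hgap v
    split_ifs <;> omega
  · have := hc.2 huv
    have := hgap u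
    have := hgap v
    split_ifs <;> omega

theorem IsBackboneColoring.le_sub_or_lt_of_adj {V : Type*} {G H : SimpleGraph V} {q k : ℕ}
    {c : V → ℕ} (hc : IsBackboneColoring G H q k c) {u w : V} (huw : H.Adj u w) :
    c u ≤ k - q ∨ q < c u := by
  have := hc.1.1 u
  have := hc.1.1 w
  rcases le_abs.mp (hc.2 huw) with h | h <;> omega

theorem stmt_3_general {V : Type*} (G H : SimpleGraph V)
    (hdeg : ∀ v : V, ∃ w : V, H.Adj v w) (q : ℕ)
    (k : ℕ) (hk : k < 2 * q) (c : V → ℕ) (hc : IsBackboneColoring G H q k c) :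
    (∀ u : V, ¬ (k - q < c u ∧ c u ≤ q)) ∧ chromNum G ≤ k - (2 * q - k) := by
  have hsplit : ∀ u, c u ≤ k - q ∨ q < c u := fun u ↦
    (hdeg u).elim fun _ huw ↦ hc.le_sub_or_lt_of_adj huw
  refine ⟨fun u ↦ by have := hsplit u; omega, ?_⟩
  rcases isEmpty_or_nonempty V with _ | ⟨⟨v⟩⟩
  · exact chromNum_le_of_isProperColoring (isProperColoring_of_isEmpty G _ c)
  -- so that `k - q + (2 * q - k) = q` despite truncated subtraction
  have hqk : q ≤ k := by
    have := hsplit v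
    have := hc.1.1 v
    omega
  refine chromNum_le_of_isProperColoring (hc.1.compress_gap (a := k - q) (by omega) fun u ↦ ?_)
  have := hsplit u
  omega

/-- If `H` is a spanning subgraph of `G` with minimum degree at least one and `c`
is a `q`-backbone `k`-coloring of `(G,H)` with `k < 2q`, then no vertex receives
a color in `{k-q+1, …, q}`; consequently `k - (2q - k) ≥ χ(G)`. -/
theorem stmt_3 {V : Type*} [Fintype V] (G H : SimpleGraph V)
    (hHG : H ≤ G) (hdeg : ∀ v : V, ∃ w : V, H.Adj v w) (q : ℕ) (hq : 1 ≤ q)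
    (k : ℕ) (hk : k < 2 * q) (c : V → ℕ) (hc : IsBackboneColoring G H q k c) :
    (∀ u : V, ¬ (k - q < c u ∧ c u ≤ q)) ∧ chromNum G ≤ k - (2 * q - k) :=
  stmt_3_general G H hdeg q k hk c hc
end

section
/- For every finite connected bipartite simple graph G with at least one edge and every positive integer q, there exists a spanning tree T of G with BBC_q(G,T) = q + 1, and every spanning tree T' of G satisfies BBC_q(G,T') ≥ q + 1; i.e., the minimum of BBC_q(G,T) over all spanning trees T of G equals q + 1. -/
/-- `G` is bipartite: its vertices can be split in two parts such that every
edge joins the two parts. -/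
def IsBipartite {V : Type*} (G : SimpleGraph V) : Prop :=
  ∃ f : V → Bool, ∀ ⦃u v : V⦄, G.Adj u v → f u ≠ f v

/-!
Colouring one side of a bipartition with `1` and the other with `q + 1` is a `q`-backbone
`(q + 1)`-colouring of `(G, H)` for every spanning subgraph `H`, and no `q`-backbone colouring can
use fewer colours as soon as `H` has an edge, since the colours of its endpoints lie in `{1, …, k}`
and differ by at least `q`. A spanning tree exists since `G` is connected, and it has an edge
since `G` has two distinct vertices.
-/

section

variable {V : Type*} {G H : SimpleGraph V} {q k : ℕ}

lemma IsBackboneColoring.add_one_le {c : V → ℕ} (hc : IsBackboneColoring G H q k c) {a b : V}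
    (hab : H.Adj a b) : q + 1 ≤ k := by
  obtain ⟨⟨hrange, -⟩, hgap⟩ := hc
  have ha := hrange a
  have hb := hrange b
  have hq := hgap hab
  rcases abs_cases ((c a : ℤ) - c b) with ⟨h, -⟩ | ⟨h, -⟩ <;> omega

def bipartiteColoring (f : V → Bool) (q : ℕ) (v : V) : ℕ :=
  if f v then q + 1 else 1

lemma isBackboneColoring_bipartiteColoring {f : V → Bool} (hf : ∀ ⦃u v⦄, G.Adj u v → f u ≠ f v)
    (hHG : H ≤ G) (hq : 1 ≤ q) :
    IsBackboneColoring G H q (q + 1) (bipartiteColoring f q) := by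
  have hgap : ∀ ⦃u v⦄, G.Adj u v →
      (q : ℤ) ≤ |(bipartiteColoring f q u : ℤ) - bipartiteColoring f q v| := by
    intro u v huv
    unfold bipartiteColoring
    have := hf huv
    cases hu : f u <;> cases hv : f v <;> simp_all
  refine ⟨⟨fun v => ?_, fun u v huv hc => ?_⟩, fun u v huv => hgap (hHG huv)⟩
  · unfold bipartiteColoring
    split <;> omega
  · have := hgap huv
    rw [hc, sub_self, abs_zero] at this
    omega

theorem IsBipartite.BBC_eq (hbip : IsBipartite G) (hHG : H ≤ G) (hH : H ≠ ⊥) (hq : 1 ≤ q) :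
    BBC G H q = q + 1 := by
  obtain ⟨f, hf⟩ := hbip
  obtain ⟨a, b, hab⟩ := SimpleGraph.ne_bot_iff_exists_adj.mp hH
  refine le_antisymm (Nat.sInf_le ⟨_, isBackboneColoring_bipartiteColoring hf hHG hq⟩) ?_
  refine le_csInf ⟨_, _, isBackboneColoring_bipartiteColoring hf hHG hq⟩ ?_
  rintro k ⟨c, hc⟩
  exact hc.add_one_le hab

lemma SimpleGraph.IsTree.ne_bot [Nontrivial V] {T : SimpleGraph V} (hT : T.IsTree) : T ≠ ⊥ := by
  rintro rfl
  exact SimpleGraph.not_connected_bot hT.connected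

end

theorem stmt_4_general {V : Type*} (G : SimpleGraph V) (hG : G.Connected)
    (hbip : IsBipartite G) (hedge : ∃ u v : V, G.Adj u v) (q : ℕ) (hq : 1 ≤ q) :
    (∃ T : SimpleGraph V, T ≤ G ∧ T.IsTree ∧ BBC G T q = q + 1) ∧
    (∀ T' : SimpleGraph V, T' ≤ G → T'.IsTree → q + 1 ≤ BBC G T' q) := by
  obtain ⟨u, v, huv⟩ := hedge
  have := huv.nontrivial
  obtain ⟨T, hTG, hT⟩ := hG.exists_isTree_le
  exact ⟨⟨T, hTG, hT, hbip.BBC_eq hTG hT.ne_bot hq⟩,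
    fun T' hT'G hT' => (hbip.BBC_eq hT'G hT'.ne_bot hq).ge⟩

/-- Every connected bipartite graph `G` with at least one edge has a spanning
tree `T` with `BBC_q(G,T) = q + 1`, and every spanning tree `T'` of `G`
satisfies `BBC_q(G,T') ≥ q + 1`. -/
theorem stmt_4 {V : Type*} [Fintype V] (G : SimpleGraph V) (hG : G.Connected)
    (hbip : IsBipartite G) (hedge : ∃ u v : V, G.Adj u v) (q : ℕ) (hq : 1 ≤ q) :
    (∃ T : SimpleGraph V, T ≤ G ∧ T.IsTree ∧ BBC G T q = q + 1) ∧
    (∀ T' : SimpleGraph V, T' ≤ G → T'.IsTree → q + 1 ≤ BBC G T' q) :=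
  stmt_4_general G hG hbip hedge q hq
end

section
/- Let G be a finite connected simple graph that is not bipartite and satisfies χ(G) ≤ 4 (for example, any nonbipartite planar graph, by the Four Color Theorem). Then G has a spanning tree T such that BBC_2(G,T) = 4. -/
/-
The lower bound holds for every spanning tree: in a backbone colouring with three colours each
vertex has a tree neighbour at colour distance at least `2`, so only the colours `1` and `3` occur
and `G` would be bipartite.

For the upper bound it suffices to find a proper 4-colouring `c` whose edges of colour gap at
least `2` form a connected spanning subgraph; any spanning tree of it is then a backbone. Take
`c` maximising the component `S` of a fixed vertex in that subgraph. If `S` is not everything,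
every edge leaving `S` has colour gap `1`, and permuting the colours outside `S` by one of
`(1 3)(2 4)`, `(1 4)` or `(1 2)(3 4)` keeps `c` proper while turning some leaving edge into a
gap-`2` edge, so `S` grows.
-/

open Set
open SimpleGraph (ConnectedComponent)

section

variable {V : Type*} {G H : SimpleGraph V} {k q : ℕ} {c : V → ℕ}

lemma IsProperColoring.mono {k' : ℕ} (hc : IsProperColoring G k c) (hk : k ≤ k') :
    IsProperColoring G k' c :=
  ⟨fun v => ⟨(hc.1 v).1, (hc.1 v).2.trans hk⟩, hc.2⟩

lemma isProperColoring_equivFin [Fintype V] :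
    IsProperColoring G (Fintype.card V) (fun v => Fintype.equivFin V v + 1) := by
  refine ⟨fun v => ⟨Nat.le_add_left _ _, (Fintype.equivFin V v).isLt⟩, fun u v huv h => huv.ne ?_⟩
  exact (Fintype.equivFin V).injective (Fin.ext (Nat.add_right_cancel h))

lemma exists_isProperColoring_of_chromNum_le [Fintype V] (h : chromNum G ≤ k) :
    ∃ c, IsProperColoring G k c := by
  obtain ⟨c, hc⟩ : chromNum G ∈ {k | ∃ c, IsProperColoring G k c} :=
    Nat.sInf_mem ⟨_, _, isProperColoring_equivFin⟩
  exact ⟨c, hc.mono h⟩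

lemma nontrivial_of_not_isBipartite (h : ¬ IsBipartite G) : Nontrivial V := by
  by_contra hV
  rw [not_nontrivial_iff_subsingleton] at hV
  exact h ⟨fun _ => true, fun u v huv => (huv.ne (Subsingleton.elim u v)).elim⟩

-- With at most three colours, a vertex at colour distance `≥ 2` from some `H`-neighbour has
-- colour `1` or `3`, so `c` is a 2-colouring of `G`.
lemma isBipartite_of_isBackboneColoring (hH : ∀ v, ∃ w, H.Adj v w)
    (hc : IsBackboneColoring G H 2 k c) (hk : k ≤ 3) : IsBipartite G := by
  have h13 : ∀ v, c v = 1 ∨ c v = 3 := fun v => by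
    obtain ⟨w, hvw⟩ := hH v
    have hgap := hc.2 hvw
    have := hc.1.1 v; have := hc.1.1 w
    rw [le_abs] at hgap
    omega
  refine ⟨fun v => decide (c v = 1), fun u v huv => ?_⟩
  have := hc.1.2 huv
  have := h13 u; have := h13 v
  simp only [ne_eq, decide_eq_decide]
  omega

lemma four_le_of_isBackboneColoring (hG : ¬ IsBipartite G) (hH : ∀ v, ∃ w, H.Adj v w)
    (hc : IsBackboneColoring G H 2 k c) : 4 ≤ k := by
  by_contra hk
  exact hG (isBipartite_of_isBackboneColoring hH hc (by omega))

lemma bbc_eq_four (hG : ¬ IsBipartite G) (hH : ∀ v, ∃ w, H.Adj v w)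
    (hc : IsBackboneColoring G H 2 4 c) : BBC G H 2 = 4 :=
  le_antisymm (Nat.sInf_le ⟨c, hc⟩)
    (le_csInf ⟨4, c, hc⟩ fun _ ⟨_, hd⟩ => four_le_of_isBackboneColoring hG hH hd)

def SimpleGraph.gapGraph (G : SimpleGraph V) (q : ℕ) (c : V → ℕ) : SimpleGraph V where
  Adj u v := G.Adj u v ∧ (q : ℤ) ≤ |(c u : ℤ) - c v|
  symm := ⟨fun _ _ h => ⟨h.1.symm, by rw [abs_sub_comm]; exact h.2⟩⟩
  loopless := ⟨fun _ h => h.1.ne rfl⟩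

lemma SimpleGraph.gapGraph_le : G.gapGraph q c ≤ G := fun _ _ h => h.1

lemma IsProperColoring.isBackboneColoring (hc : IsProperColoring G k c)
    (hH : H ≤ G.gapGraph q c) : IsBackboneColoring G H q k c :=
  ⟨hc, fun _ _ huv => (hH huv).2⟩

lemma IsProperColoring.piecewise (hc : IsProperColoring G k c) (S : Set V)
    [DecidablePred (· ∈ S)] (σ : Equiv.Perm ℕ) (hσ : ∀ n ∈ Icc 1 k, σ n ∈ Icc 1 k)
    (hcross : ∀ a b, a ∈ S → b ∉ S → G.Adj a b → σ (c b) ≠ c a) :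
    IsProperColoring G k (S.piecewise c (σ ∘ c)) := by
  refine ⟨fun v => ?_, fun u v huv => ?_⟩
  · by_cases hv : v ∈ S
    · simpa [hv] using hc.1 v
    · simpa [hv] using hσ _ (hc.1 v)
  · by_cases hu : u ∈ S <;> by_cases hv : v ∈ S <;> simp only [Set.piecewise, hu, hv,
      ite_true, ite_false, Function.comp_apply, ne_eq, EmbeddingLike.apply_eq_iff_eq]
    · exact hc.2 huv
    · exact (hcross u v hu hv huv).symm
    · exact hcross v u hv hu huv.symm
    · exact hc.2 huv

lemma supp_subset_of_eqOn {c' : V → ℕ} (v : V)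
    (hc' : EqOn c' c ((G.gapGraph q c).connectedComponentMk v).supp) :
    ((G.gapGraph q c).connectedComponentMk v).supp ⊆
      ((G.gapGraph q c').connectedComponentMk v).supp := by
  set C := (G.gapGraph q c).connectedComponentMk v
  let f : C.toSimpleGraph →g G.gapGraph q c' :=
    ⟨Subtype.val, fun {a b} h => ⟨h.1, by rw [hc' a.2, hc' b.2]; exact h.2⟩⟩
  intro x hx
  exact ConnectedComponent.sound
    (((ConnectedComponent.connected_toSimpleGraph C).preconnected ⟨x, hx⟩ ⟨v, rfl⟩).map f)

-- `P i j` stands for an edge leaving a set, coloured `i` inside and `j` outside. Recolouring the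
-- outside by `σ` keeps the colouring proper when `σ j ≠ i` for all such pairs, and enlarges the
-- gap-`2` component as soon as one pair gets gap `2`.
lemma exists_perm_of_crossingPairs (P : ℕ → ℕ → Prop)
    (hP : ∀ i j, P i j → i ∈ Icc 1 4 ∧ j ∈ Icc 1 4 ∧ |(i : ℤ) - j| = 1) (hne : ∃ i j, P i j) :
    ∃ σ : Equiv.Perm ℕ, (∀ n ∈ Icc 1 4, σ n ∈ Icc 1 4) ∧ (∀ i j, P i j → σ j ≠ i) ∧
      ∃ i j, P i j ∧ 2 ≤ |(i : ℤ) - σ j| := by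
  have hcases : ∀ i j, P i j → i = 1 ∧ j = 2 ∨ i = 4 ∧ j = 3 ∨ i = 2 ∧ j = 1 ∨ i = 3 ∧ j = 4 ∨
      i = 2 ∧ j = 3 ∨ i = 3 ∧ j = 2 := fun i j hij => by
    obtain ⟨⟨hi1, hi4⟩, ⟨hj1, hj4⟩, hd⟩ := hP i j hij
    rw [abs_eq zero_le_one] at hd
    omega
  by_cases hA : ∃ i j, P i j ∧ (i = 1 ∧ j = 2 ∨ i = 4 ∧ j = 3)
  · refine ⟨Equiv.swap 1 3 * Equiv.swap 2 4, ?_, fun i j hij => ?_, ?_⟩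
    · intro n ⟨h1, h4⟩; interval_cases n <;> decide
    · rcases hcases i j hij with ⟨rfl, rfl⟩ | ⟨rfl, rfl⟩ | ⟨rfl, rfl⟩ | ⟨rfl, rfl⟩ | ⟨rfl, rfl⟩ |
        ⟨rfl, rfl⟩ <;> decide
    · obtain ⟨i, j, hij, ⟨rfl, rfl⟩ | ⟨rfl, rfl⟩⟩ := hA <;> exact ⟨_, _, hij, by decide⟩
  by_cases hB : ∃ i j, P i j ∧ (i = 2 ∧ j = 1 ∨ i = 3 ∧ j = 4)
  · refine ⟨Equiv.swap 1 4, ?_, fun i j hij => ?_, ?_⟩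
    · intro n ⟨h1, h4⟩; interval_cases n <;> decide
    · rcases hcases i j hij with ⟨rfl, rfl⟩ | ⟨rfl, rfl⟩ | ⟨rfl, rfl⟩ | ⟨rfl, rfl⟩ | ⟨rfl, rfl⟩ |
        ⟨rfl, rfl⟩ <;> decide
    · obtain ⟨i, j, hij, ⟨rfl, rfl⟩ | ⟨rfl, rfl⟩⟩ := hB <;> exact ⟨_, _, hij, by decide⟩
  push Not at hA hB
  have hmid : ∀ i j, P i j → i = 2 ∧ j = 3 ∨ i = 3 ∧ j = 2 := fun i j hij => by
    have := hA i j hij; have := hB i j hij; have := hcases i j hij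
    omega
  refine ⟨Equiv.swap 1 2 * Equiv.swap 3 4, ?_, fun i j hij => ?_, ?_⟩
  · intro n ⟨h1, h4⟩; interval_cases n <;> decide
  · rcases hmid i j hij with ⟨rfl, rfl⟩ | ⟨rfl, rfl⟩ <;> decide
  · obtain ⟨i, j, hij⟩ := hne
    rcases hmid i j hij with ⟨rfl, rfl⟩ | ⟨rfl, rfl⟩ <;> exact ⟨_, _, hij, by decide⟩

lemma exists_recoloring_supp_ssubset (hG : G.Preconnected) (hc : IsProperColoring G 4 c)
    (v : V) (hS : ((G.gapGraph 2 c).connectedComponentMk v).supp ≠ univ) :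
    ∃ c', IsProperColoring G 4 c' ∧ ((G.gapGraph 2 c).connectedComponentMk v).supp ⊂
      ((G.gapGraph 2 c').connectedComponentMk v).supp := by
  classical
  set S := ((G.gapGraph 2 c).connectedComponentMk v).supp
  have hgap : ∀ a b, a ∈ S → b ∉ S → G.Adj a b → |(c a : ℤ) - c b| = 1 := by
    intro a b ha hb hab
    have hlt : ¬ (2 : ℤ) ≤ |(c a : ℤ) - c b| := fun h =>
      hb ((ConnectedComponent.connectedComponentMk_eq_of_adj (show (G.gapGraph 2 c).Adj b a
        from ⟨hab.symm, by rw [abs_sub_comm]; exact_mod_cast h⟩)).trans ha)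
    have hne : c a ≠ c b := hc.2 hab
    rw [abs_eq zero_le_one]
    rw [not_le, abs_lt] at hlt
    omega
  obtain ⟨w, hw⟩ := (ne_univ_iff_exists_notMem S).1 hS
  obtain ⟨d, -, hd, hd'⟩ := (hG v w).some.exists_boundary_dart S rfl hw
  obtain ⟨σ, hσ, hsafe, a, b, ⟨x, y, hx, hy, hxy, rfl, rfl⟩, hab⟩ :=
    exists_perm_of_crossingPairs (fun i j => ∃ a b, a ∈ S ∧ b ∉ S ∧ G.Adj a b ∧ c a = i ∧ c b = j)
      (by rintro _ _ ⟨a, b, ha, hb, hab, rfl, rfl⟩; exact ⟨hc.1 a, hc.1 b, hgap a b ha hb hab⟩)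
      ⟨_, _, _, _, hd, hd', d.adj, rfl, rfl⟩
  have hc' := hc.piecewise S σ hσ fun a b ha hb hab => hsafe _ _ ⟨a, b, ha, hb, hab, rfl, rfl⟩
  have hsub := supp_subset_of_eqOn (c' := S.piecewise c (σ ∘ c)) v (piecewise_eqOn S c _)
  refine ⟨_, hc', ssubset_of_subset_not_subset hsub fun h => hy (h ?_)⟩
  refine (ConnectedComponent.connectedComponentMk_eq_of_adj ?_).trans (hsub hx)
  refine ⟨hxy.symm, ?_⟩
  simp only [piecewise_eq_of_mem _ _ _ hx, piecewise_eq_of_notMem _ _ _ hy, Function.comp_apply]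
  rw [abs_sub_comm]
  exact_mod_cast hab

lemma exists_connected_gapGraph [Finite V] (hG : G.Connected) (hc : IsProperColoring G 4 c) :
    ∃ d, IsProperColoring G 4 d ∧ (G.gapGraph 2 d).Connected := by
  obtain ⟨v⟩ := hG.nonempty
  obtain ⟨d, hd, hmax⟩ := Finite.exists_maximalFor'
    (fun c => ((G.gapGraph 2 c).connectedComponentMk v).supp) {c | IsProperColoring G 4 c}
    (toFinite _) ⟨c, hc⟩
  have huniv : ((G.gapGraph 2 d).connectedComponentMk v).supp = univ := by
    by_contra hS
    obtain ⟨d', hd', hlt⟩ := exists_recoloring_supp_ssubset hG.preconnected hd v hS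
    exact hlt.not_subset (hmax hd' hlt.subset)
  refine ⟨d, hd, (SimpleGraph.connected_iff_exists_forall_reachable _).2 ⟨v, fun x => ?_⟩⟩
  have hx : x ∈ ((G.gapGraph 2 d).connectedComponentMk v).supp := huniv ▸ mem_univ x
  exact (ConnectedComponent.exact hx).symm

end

/-- Every connected nonbipartite graph `G` with `χ(G) ≤ 4` (e.g. a nonbipartite
planar graph) has a spanning tree `T` with `BBC_2(G,T) = 4`. -/
theorem stmt_6 {V : Type*} [Fintype V] (G : SimpleGraph V) (hG : G.Connected)
    (hnbip : ¬ IsBipartite G) (hchi : chromNum G ≤ 4) :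
    ∃ T : SimpleGraph V, T ≤ G ∧ T.IsTree ∧ BBC G T 2 = 4 := by
  obtain ⟨c₀, hc₀⟩ := exists_isProperColoring_of_chromNum_le hchi
  obtain ⟨c, hc, hconn⟩ := exists_connected_gapGraph hG hc₀
  obtain ⟨T, hTle, hT⟩ := hconn.exists_isTree_le
  have : Nontrivial V := nontrivial_of_not_isBipartite hnbip
  exact ⟨T, hTle.trans SimpleGraph.gapGraph_le, hT,
    bbc_eq_four hnbip hT.connected.preconnected.exists_adj_of_nontrivial
      (hc.isBackboneColoring hTle)⟩
end

section
/- Every finite connected simple graph G with 2 ≤ χ(G) ≤ 3 has a spanning tree T such that BBC_2(G,T) = χ(G) + 1, and every spanning tree T' of G satisfies BBC_2(G,T') ≥ χ(G) + 1. -/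
/-!
Call an edge of `G` *good* for a colouring `c` if its colours differ by at least 2; a
2-backbone colouring for a spanning tree `T` is exactly a proper colouring all of whose
`T`-edges are good. For `χ(G) = 2` the colours `1, 3` make every edge good. For `χ(G) = 3`,
start from a 4-colouring with no edge coloured `{2, 3}`. If the good edges do not connect `G`,
let `S` be the good component of a vertex and apply `i ↦ 5 - i` to the colours outside `S`:
every edge leaving `S` was bad and becomes good, no edge gets coloured `{2, 3}`, and good edges
stay good, so `S` grows. Repeating, the good edges span a connected subgraph, and any of its
spanning trees `T` has `BBC_2(G, T) ≤ 4`.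

Conversely, in a 2-backbone colouring with at most 3 colours of a spanning tree on at least two
vertices, no vertex can get colour 2, so halving the colours `1, 3` 2-colours `G`.
-/

open SimpleGraph

lemma natCast_le_abs_sub_iff {q a b : ℕ} :
    (q : ℤ) ≤ |(a : ℤ) - (b : ℤ)| ↔ a + q ≤ b ∨ b + q ≤ a := by
  rw [le_abs']
  omega

namespace SimpleGraph

variable {V : Type*}

def gapGraph_s8 (G : SimpleGraph V) (q : ℕ) (c : V → ℕ) : SimpleGraph V where
  Adj u v := G.Adj u v ∧ (q : ℤ) ≤ |(c u : ℤ) - (c v : ℤ)|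
  symm := ⟨fun _ _ h => ⟨h.1.symm, by rw [abs_sub_comm]; exact h.2⟩⟩
  loopless := ⟨fun v h => G.loopless.irrefl v h.1⟩

variable {G : SimpleGraph V} {q : ℕ} {c : V → ℕ}

@[simp] lemma gapGraph_adj {u v : V} :
    (G.gapGraph_s8 q c).Adj u v ↔ G.Adj u v ∧ (q : ℤ) ≤ |(c u : ℤ) - (c v : ℤ)| := Iff.rfl

lemma gapGraph_le_s8 : G.gapGraph_s8 q c ≤ G := fun _ _ h => h.1

end SimpleGraph

section Colorings

variable {V : Type*} {G H : SimpleGraph V} {q k : ℕ} {c : V → ℕ}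

lemma IsProperColoring.chromNum_le (hc : IsProperColoring G k c) : chromNum G ≤ k :=
  Nat.sInf_le ⟨c, hc⟩

lemma IsBackboneColoring.BBC_le (hc : IsBackboneColoring G H q k c) : BBC G H q ≤ k :=
  Nat.sInf_le ⟨c, hc⟩

lemma IsProperColoring.isBackboneColoring_of_le_gapGraph (hc : IsProperColoring G k c)
    (hH : H ≤ G.gapGraph_s8 q c) : IsBackboneColoring G H q k c :=
  ⟨hc, fun _ _ h => (hH h).2⟩

lemma exists_isBackboneColoring [Finite V] (G H : SimpleGraph V) (q : ℕ) :
    ∃ k c, IsBackboneColoring G H q k c := by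
  obtain ⟨n, ⟨e⟩⟩ := Finite.exists_equiv_fin V
  refine ⟨(q + 1) * n, fun v => (q + 1) * e v + 1, ⟨fun v => ?_, fun u v huv heq => ?_⟩,
    fun u v huv => ?_⟩
  · have := (e v).isLt
    constructor <;> nlinarith
  · exact huv.ne (e.injective (Fin.ext (by simpa using heq)))
  · have hne : (e u : ℕ) ≠ e v := fun h => huv.ne (e.injective (Fin.ext h))
    rw [natCast_le_abs_sub_iff]
    rcases Nat.lt_or_gt_of_ne hne with h | h
    · exact Or.inl (by nlinarith)
    · exact Or.inr (by nlinarith)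

lemma exists_isProperColoring_chromNum [Finite V] (G : SimpleGraph V) :
    ∃ c, IsProperColoring G (chromNum G) c := by
  obtain ⟨k, c, hc⟩ := exists_isBackboneColoring G ⊥ 0
  exact Nat.sInf_mem (s := {k | ∃ c : V → ℕ, IsProperColoring G k c}) ⟨k, c, hc.1⟩

lemma nontrivial_of_two_le_chromNum (h : 2 ≤ chromNum G) : Nontrivial V := by
  by_contra hV
  rw [not_nontrivial_iff_subsingleton] at hV
  have : IsProperColoring G 1 (fun _ => 1) := by
    exact ⟨fun _ => ⟨le_rfl, le_rfl⟩, fun u v huv _ => huv.ne (Subsingleton.elim u v)⟩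
  have := this.chromNum_le
  omega

end Colorings

section LowerBound

variable {V : Type*} {G H : SimpleGraph V} {k : ℕ} {c : V → ℕ}

lemma IsBackboneColoring.three_le {u v : V} (hc : IsBackboneColoring G H 2 k c)
    (huv : H.Adj u v) : 3 ≤ k := by
  have := hc.1.1 u
  have := hc.1.1 v
  have := natCast_le_abs_sub_iff.1 (hc.2 huv)
  omega

lemma IsBackboneColoring.chromNum_le_two (hc : IsBackboneColoring G H 2 3 c)
    (hH : ∀ v, ∃ w, H.Adj v w) : chromNum G ≤ 2 := by
  have hc13 : ∀ v, c v = 1 ∨ c v = 3 := fun v => by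
    obtain ⟨w, hw⟩ := hH v
    have := hc.1.1 v
    have := hc.1.1 w
    have := natCast_le_abs_sub_iff.1 (hc.2 hw)
    omega
  refine IsProperColoring.chromNum_le (c := fun v => (c v + 1) / 2)
    ⟨fun v => by dsimp only; have := hc13 v; omega, fun u v huv => ?_⟩
  dsimp only
  have := hc.1.2 huv
  have := hc13 u
  have := hc13 v
  omega

lemma chromNum_add_one_le_BBC [Finite V] [Nontrivial V] {T : SimpleGraph V}
    (hT : T.Connected) (hχ : chromNum G ≤ 3) : chromNum G + 1 ≤ BBC G T 2 := by
  obtain ⟨k, c, hc⟩ := exists_isBackboneColoring G T 2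
  refine le_csInf ⟨k, c, hc⟩ fun k ⟨c, hc⟩ => ?_
  have hT' := hT.preconnected.exists_adj_of_nontrivial
  obtain ⟨w, hw⟩ := hT' (Classical.arbitrary V)
  have h3 := hc.three_le hw
  rcases (by omega : k = 3 ∨ 4 ≤ k) with rfl | h4
  · have := hc.chromNum_le_two hT'
    omega
  · omega

end LowerBound

section Reflection

variable {V : Type*} {G : SimpleGraph V} {m : ℕ} {c : V → ℕ}

/-- Preserved by applying `i ↦ 2m + 1 - i` to the colours on any set of vertices; reflecting one
end of an edge whose colours differ by 1 then makes them differ by at least 2. -/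
def IsMiddleFreeColoring (G : SimpleGraph V) (m : ℕ) (c : V → ℕ) : Prop :=
  IsProperColoring G (2 * m) c ∧ ∀ ⦃u v⦄, G.Adj u v → c u = m → c v ≠ m + 1

lemma IsProperColoring.isMiddleFreeColoring {f : V → ℕ} (hf : IsProperColoring G (m + 1) f)
    (hm : 2 ≤ m) : IsMiddleFreeColoring G m (fun v => if f v = m + 1 then m + 2 else f v) := by
  refine ⟨⟨fun v => ?_, fun u v huv => ?_⟩, fun u v huv => ?_⟩ <;> dsimp only
  · have := hf.1 v
    split_ifs <;> omega
  · have := hf.2 huv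
    have := hf.1 u
    have := hf.1 v
    split_ifs <;> omega
  · have := hf.1 u
    have := hf.1 v
    split_ifs <;> omega

lemma IsMiddleFreeColoring.adj {u v : V} (hc : IsMiddleFreeColoring G m c) (huv : G.Adj u v) :
    1 ≤ c u ∧ c u ≤ 2 * m ∧ 1 ≤ c v ∧ c v ≤ 2 * m ∧ c u ≠ c v ∧
      ¬(c u = m ∧ c v = m + 1) ∧ ¬(c v = m ∧ c u = m + 1) :=
  ⟨(hc.1.1 u).1, (hc.1.1 u).2, (hc.1.1 v).1, (hc.1.1 v).2, hc.1.2 huv,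
    fun h => hc.2 huv h.1 h.2, fun h => hc.2 huv.symm h.1 h.2⟩

variable {S : Set V} [DecidablePred (· ∈ S)]

lemma IsMiddleFreeColoring.reflect_compl_adj {u v : V} (hc : IsMiddleFreeColoring G m c)
    (hS : ∀ ⦃u v⦄, (G.gapGraph_s8 2 c).Adj u v → u ∈ S → v ∈ S) (huv : G.Adj u v) :
    let c' := S.piecewise c fun v => 2 * m + 1 - c v
    c' u ≠ c' v ∧ (c' u = m → c' v ≠ m + 1) ∧
      ((G.gapGraph_s8 2 c).Adj u v → (G.gapGraph_s8 2 c').Adj u v) ∧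
      (u ∈ S → v ∉ S → (G.gapGraph_s8 2 c').Adj u v) := by
  intro c'
  obtain ⟨-, hu2, -, hv2, hne, hmid, hmid'⟩ := hc.adj huv
  simp only [c', gapGraph_adj, huv, true_and, natCast_le_abs_sub_iff]
  by_cases hu : u ∈ S <;> by_cases hv : v ∈ S
  · simp only [hu, hv, Set.piecewise_eq_of_mem, not_true_eq_false, false_implies, imp_true_iff,
      imp_self, and_true]
    omega
  · have := natCast_le_abs_sub_iff.not.1 fun h => hv (hS ⟨huv, h⟩ hu)
    simp only [hu, hv, Set.piecewise_eq_of_mem, Set.piecewise_eq_of_notMem, not_false_eq_true]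
    omega
  · have := natCast_le_abs_sub_iff.not.1 fun h => hu (hS ⟨huv.symm, h⟩ hv)
    simp only [hu, hv, Set.piecewise_eq_of_mem, Set.piecewise_eq_of_notMem, not_false_eq_true]
    omega
  · simp only [hu, hv, Set.piecewise_eq_of_notMem, not_false_eq_true, false_implies, and_true]
    omega

lemma IsMiddleFreeColoring.reflect_compl (hc : IsMiddleFreeColoring G m c)
    (hS : ∀ ⦃u v⦄, (G.gapGraph_s8 2 c).Adj u v → u ∈ S → v ∈ S) :
    IsMiddleFreeColoring G m (S.piecewise c fun v => 2 * m + 1 - c v) := by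
  refine ⟨⟨fun v => ?_, fun u v huv => (hc.reflect_compl_adj hS huv).1⟩,
    fun u v huv => (hc.reflect_compl_adj hS huv).2.1⟩
  have := hc.1.1 v
  by_cases hv : v ∈ S <;> simp only [hv, Set.piecewise_eq_of_mem, Set.piecewise_eq_of_notMem,
    not_false_eq_true] <;> omega

lemma IsMiddleFreeColoring.gapGraph_le_gapGraph_reflect_compl (hc : IsMiddleFreeColoring G m c)
    (hS : ∀ ⦃u v⦄, (G.gapGraph_s8 2 c).Adj u v → u ∈ S → v ∈ S) :
    G.gapGraph_s8 2 c ≤ G.gapGraph_s8 2 (S.piecewise c fun v => 2 * m + 1 - c v) :=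
  fun _ _ h => (hc.reflect_compl_adj hS h.1).2.2.1 h

end Reflection

section UpperBound

variable {V : Type*} {G : SimpleGraph V} {k m : ℕ} {c : V → ℕ}

lemma IsMiddleFreeColoring.exists_reachable_ssubset (hG : G.Connected)
    (hc : IsMiddleFreeColoring G m c) {r x : V} (hx : ¬(G.gapGraph_s8 2 c).Reachable r x) :
    ∃ c', IsMiddleFreeColoring G m c' ∧
      {v | (G.gapGraph_s8 2 c).Reachable r v} ⊂ {v | (G.gapGraph_s8 2 c').Reachable r v} := by
  classical
  set S := {v | (G.gapGraph_s8 2 c).Reachable r v}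
  have hS : ∀ ⦃u v⦄, (G.gapGraph_s8 2 c).Adj u v → u ∈ S → v ∈ S :=
    fun _ _ huv hu => hu.trans huv.reachable
  obtain ⟨p⟩ := hG.preconnected r x
  obtain ⟨d, -, hd, hd'⟩ := p.exists_boundary_dart S (Reachable.refl r) hx
  have hsub : S ⊆ {v | (G.gapGraph_s8 2 (S.piecewise c fun v => 2 * m + 1 - c v)).Reachable r v} :=
    fun v hv => hv.mono (hc.gapGraph_le_gapGraph_reflect_compl hS)
  refine ⟨_, hc.reflect_compl hS, hsub.ssubset_of_not_subset fun h => hd' (h ?_)⟩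
  exact (hsub hd).trans ((hc.reflect_compl_adj hS d.adj).2.2.2 hd hd').reachable

lemma IsMiddleFreeColoring.exists_gapGraph_connected [Finite V] (hG : G.Connected)
    (hc : IsMiddleFreeColoring G m c) :
    ∃ c', IsMiddleFreeColoring G m c' ∧ (G.gapGraph_s8 2 c').Connected := by
  obtain ⟨r⟩ := hG.nonempty
  induction hn : {v | ¬(G.gapGraph_s8 2 c).Reachable r v}.ncard using Nat.strong_induction_on
    generalizing c with
  | _ n ih =>
  by_cases hall : ∀ v, (G.gapGraph_s8 2 c).Reachable r v
  · exact ⟨c, hc, (connected_iff_exists_forall_reachable _).2 ⟨r, hall⟩⟩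
  push Not at hall
  obtain ⟨x, hx⟩ := hall
  obtain ⟨c', hc', hsub⟩ := hc.exists_reachable_ssubset hG hx
  refine ih _ ?_ hc' rfl
  rw [← hn]
  exact Set.ncard_lt_ncard (compl_lt_compl_iff_lt.2 hsub)

lemma IsProperColoring.exists_gapGraph_connected_of_two (hG : G.Connected) {f : V → ℕ}
    (hf : IsProperColoring G 2 f) :
    ∃ c, IsProperColoring G 3 c ∧ (G.gapGraph_s8 2 c).Connected := by
  refine ⟨fun v => 2 * f v - 1, ⟨fun v => ?_, fun u v huv => ?_⟩,
    hG.mono fun u v huv => ⟨huv, ?_⟩⟩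
  · have := hf.1 v
    dsimp only
    omega
  all_goals
    have := hf.1 u
    have := hf.1 v
    have := hf.2 huv
    try rw [natCast_le_abs_sub_iff]
    dsimp only
    omega

lemma exists_isProperColoring_gapGraph_connected [Finite V] (hG : G.Connected)
    (hχ : 2 ≤ chromNum G) (hχ' : chromNum G ≤ 3) :
    ∃ c, IsProperColoring G (chromNum G + 1) c ∧ (G.gapGraph_s8 2 c).Connected := by
  obtain ⟨f, hf⟩ := exists_isProperColoring_chromNum G
  rcases (by omega : chromNum G = 2 ∨ chromNum G = 3) with h | h <;> rw [h] at hf ⊢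
  · exact hf.exists_gapGraph_connected_of_two hG
  · obtain ⟨c, hc, hconn⟩ := (hf.isMiddleFreeColoring le_rfl).exists_gapGraph_connected hG
    exact ⟨c, hc.1, hconn⟩

lemma IsProperColoring.exists_isTree_le_BBC_le (hc : IsProperColoring G k c)
    (hconn : (G.gapGraph_s8 2 c).Connected) : ∃ T ≤ G, T.IsTree ∧ BBC G T 2 ≤ k := by
  obtain ⟨T, hT, htree⟩ := hconn.exists_isTree_le
  exact ⟨T, hT.trans gapGraph_le_s8, htree, (hc.isBackboneColoring_of_le_gapGraph hT).BBC_le⟩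

end UpperBound

/-- Every connected graph `G` with `2 ≤ χ(G) ≤ 3` has a spanning tree `T` with
`BBC_2(G,T) = χ(G) + 1`, and every spanning tree `T'` of `G` satisfies
`BBC_2(G,T') ≥ χ(G) + 1`. -/
theorem stmt_8 {V : Type*} [Fintype V] (G : SimpleGraph V) (hG : G.Connected)
    (hchi : 2 ≤ chromNum G) (hchi' : chromNum G ≤ 3) :
    (∃ T : SimpleGraph V, T ≤ G ∧ T.IsTree ∧ BBC G T 2 = chromNum G + 1) ∧
    (∀ T' : SimpleGraph V, T' ≤ G → T'.IsTree →
      chromNum G + 1 ≤ BBC G T' 2) := by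
  have := nontrivial_of_two_le_chromNum hchi
  have hlower : ∀ T : SimpleGraph V, T ≤ G → T.IsTree → chromNum G + 1 ≤ BBC G T 2 :=
    fun _ _ hT => chromNum_add_one_le_BBC hT.connected hchi'
  obtain ⟨c, hc, hconn⟩ := exists_isProperColoring_gapGraph_connected hG hchi hchi'
  obtain ⟨T, hTG, hT, hBBC⟩ := hc.exists_isTree_le_BBC_le hconn
  exact ⟨⟨T, hTG, hT, le_antisymm hBBC (hlower T hTG hT)⟩, hlower⟩
end
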